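/- There is an exponential gap between node-averaged and slowest-node complexity: there exists a distributed problem (leader election on cycles) whose slowest-node deterministic complexity on $n$-node cycles is $\Theta(n)$ while its node-averaged deterministic complexity is $O(\log n)$. -/

import Mathlib

/-!
Lower bound: a rule that decides from radius `k < n/4` can be fooled by gluing. Elect leaders
`a` for the identifiers `val` and `b` for `val + n`; an injective assignment that copies the
radius-`k` view of `a` around node `0` and that of `b` around node `n/2` (and uses fresh large
identifiers elsewhere) makes both `0` and `n/2` output `true`.

Upper bound: if two nodes both survive to radius `k` (neither has seen a larger identifier),
each lies outside the other's radius-`k` ball, so the arcs `v, …, v + k` of the survivors are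
disjoint and at most `n / (k + 1)` nodes survive to radius `k`. Summing over `k < (n+1)/2`
bounds the total running time by `n` times a harmonic number, i.e. by `O(n log n)`.
-/

/-- Running time of node `v` on the `n`-cycle under the grow-until-dominated algorithm:
the least radius `k` at which `v` either sees a larger identifier or sees the whole
cycle. -/
noncomputable def cycleRuntime (n : ℕ) (I : ZMod n → ℕ) (v : ZMod n) : ℕ :=
  sInf {k | (∃ u : ZMod n, (∃ j : ℤ, |j| ≤ (k : ℤ) ∧ u = v + (j : ZMod n)) ∧ I v < I u) ∨
    (n + 1) / 2 ≤ k}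

open Finset Function Real

namespace ZMod

theorem sum_fin_natCast {M : Type*} [AddCommMonoid M] (n : ℕ) [NeZero n] (f : ZMod n → M) :
    ∑ v : Fin n, f (v : ℕ) = ∑ x : ZMod n, f x := by
  refine Fintype.sum_bijective _ ?_ _ _ fun _ => rfl
  rw [Fintype.bijective_iff_injective_and_card, ZMod.card, Fintype.card_fin]
  refine ⟨fun v w h => Fin.ext ?_, rfl⟩
  simpa [ZMod.val_cast_of_lt v.isLt, ZMod.val_cast_of_lt w.isLt] using congrArg ZMod.val h

theorem intCast_ne_natCast_add_intCast {n k m : ℕ} (hkm : 2 * k < m) (hmn : m + 2 * k < n)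
    {i j : ℤ} (hi : |i| ≤ k) (hj : |j| ≤ k) : (i : ZMod n) ≠ (m : ZMod n) + j := by
  intro h
  have hdvd : (n : ℤ) ∣ (m + j) - i := by
    rw [← ZMod.intCast_eq_intCast_iff_dvd_sub]
    push_cast
    exact h
  have hi' := abs_le.1 hi
  have hj' := abs_le.1 hj
  have := Int.eq_zero_of_abs_lt_dvd hdvd (abs_lt.2 ⟨by omega, by omega⟩)
  omega

end ZMod

theorem Function.Injective.existsUnique_forall_le {α β : Type*} [Finite α] [Nonempty α]
    [LinearOrder β] {f : α → β} (hf : Injective f) : ∃! a, ∀ b, f b ≤ f a := by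
  obtain ⟨a, ha⟩ := Finite.exists_max f
  exact ⟨a, ha, fun a' ha' => hf (le_antisymm (ha a') (ha' a))⟩

theorem Finset.sum_eq_sum_range_card_filter_lt {α : Type*} (s : Finset α) (f : α → ℕ)
    {M : ℕ} (hf : ∀ x ∈ s, f x ≤ M) :
    ∑ x ∈ s, f x = ∑ k ∈ range M, #{x ∈ s | k < f x} := by
  calc ∑ x ∈ s, f x = ∑ x ∈ s, #{k ∈ range M | k < f x} := by
        refine sum_congr rfl fun x hx => ?_
        rw [range_eq_Ico, Ico_filter_lt, Nat.card_Ico, min_eq_right (hf x hx), Nat.sub_zero]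
    _ = ∑ k ∈ range M, #{x ∈ s | k < f x} := by
        simp only [card_filter]
        exact sum_comm

section LowerBound

variable {n : ℕ}

theorem exists_injective_gluing [NeZero n] {k m : ℕ} (hkm : 2 * k < m) (hmn : m + 2 * k < n)
    (a b : ZMod n) :
    ∃ C : ZMod n → ℕ, Injective C ∧ (∀ x, C x < 3 * n) ∧
      (∀ j : ℤ, |j| ≤ k → C (0 + j) = (a + j).val) ∧
      (∀ j : ℤ, |j| ≤ k → C (m + j) = (b + j).val + n) := by
  classical
  let W : ZMod n → Set (ZMod n) := fun v => {x | ∃ j : ℤ, |j| ≤ k ∧ x = v + j}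
  let C : ZMod n → ℕ := fun x =>
    if x ∈ W 0 then (a + x).val else if x ∈ W m then (b + (x - m)).val + n else 2 * n + x.val
  have hval := @ZMod.val_lt n _
  refine ⟨C, fun x y h => ?_, fun x => ?_, fun j hj => ?_, fun j hj => ?_⟩
  · have := hval (a + x); have := hval (a + y); have := hval (b + (x - m))
    have := hval (b + (y - m)); have := hval x; have := hval y
    simp only [C] at h
    split_ifs at h <;> first
      | omega
      | exact add_left_cancel (ZMod.val_injective n h)
      | exact sub_left_injective (add_left_cancel (ZMod.val_injective n (Nat.add_right_cancel h)))
      | exact ZMod.val_injective n (Nat.add_left_cancel h)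
  · have := hval (a + x); have := hval (b + (x - m)); have := hval x
    simp only [C]
    split_ifs <;> omega
  · simp only [C, zero_add, if_pos (show (j : ZMod n) ∈ W 0 from ⟨j, hj, (zero_add _).symm⟩)]
  · have hW0 : (m + j : ZMod n) ∉ W 0 := by
      rintro ⟨i, hi, h⟩
      exact ZMod.intCast_ne_natCast_add_intCast hkm hmn hi hj (by rw [h, zero_add])
    simp only [C, if_neg hW0, if_pos (show (m + j : ZMod n) ∈ W m from ⟨j, hj, rfl⟩),
      add_sub_cancel_left]

theorem not_exists_local_leader_election_rule (n : ℕ) :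
    ¬ ∃ (k : ℕ) (out : (ZMod n → ℕ) → ZMod n → Bool),
        k < n / 4 ∧
        (∀ (I I' : ZMod n → ℕ) (v v' : ZMod n),
          (∀ j : ℤ, |j| ≤ (k : ℤ) → I (v + (j : ZMod n)) = I' (v' + (j : ZMod n))) →
          out I v = out I' v') ∧
        (∀ I : ZMod n → ℕ, Injective I → (∀ x, I x < n ^ 3) →
          ∃! v : ZMod n, out I v = true) := by
  rintro ⟨k, out, hk, hloc, hsolve⟩
  have : NeZero n := ⟨by omega⟩
  have hkm : 2 * k < n / 2 := by omega
  have hmn : n / 2 + 2 * k < n := by omega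
  have hcube : 3 * n ≤ n ^ 3 := calc
      3 * n ≤ n ^ 2 * n := Nat.mul_le_mul_right _ (by nlinarith)
      _ = n ^ 3 := by ring
  have hval := @ZMod.val_lt n _
  obtain ⟨a, ha, -⟩ := hsolve ZMod.val (ZMod.val_injective n) fun x => by linarith [hval x]
  obtain ⟨b, hb, -⟩ := hsolve (fun x => x.val + n)
    (fun x y h => ZMod.val_injective n (by simpa using h)) fun x => by linarith [hval x]
  obtain ⟨C, hCinj, hClt, hC0, hCm⟩ := exists_injective_gluing hkm hmn a b
  obtain ⟨c, -, hc⟩ := hsolve C hCinj fun x => (hClt x).trans_le hcube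
  have h0 : out C 0 = true := by
    rw [← hloc _ C a 0 fun j hj => (hC0 j hj).symm]
    exact ha
  have hm : out C (n / 2 : ℕ) = true := by
    rw [← hloc (fun x => x.val + n) C b _ fun j hj => (hCm j hj).symm]
    exact hb
  refine ZMod.intCast_ne_natCast_add_intCast hkm hmn (i := 0) (j := 0) (by simp) (by simp) ?_
  simpa using (hc _ h0).trans (hc _ hm).symm

end LowerBound

section UpperBound

variable {n : ℕ} {I : ZMod n → ℕ} {v w : ZMod n} {k : ℕ}

theorem cycleRuntime_le (I : ZMod n → ℕ) (v : ZMod n) : cycleRuntime n I v ≤ (n + 1) / 2 :=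
  Nat.sInf_le (Or.inr le_rfl)

theorem le_of_lt_cycleRuntime (hk : k < cycleRuntime n I v) {j : ℤ} (hj : |j| ≤ k) :
    I (v + j) ≤ I v := by
  by_contra! h
  exact Nat.notMem_of_lt_sInf hk (Or.inl ⟨_, ⟨j, hj, rfl⟩, h⟩)

theorem eq_of_lt_cycleRuntime (hI : Injective I) (hv : k < cycleRuntime n I v)
    (hw : k < cycleRuntime n I w) {d : ℤ} (hd : |d| ≤ k) (hvw : w = v + d) : v = w := by
  have hwv : v = w + ((-d : ℤ) : ZMod n) := by rw [hvw]; push_cast; ring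
  refine hI (le_antisymm ?_ ?_)
  · simpa only [← hwv] using le_of_lt_cycleRuntime hw (j := -d) (by rwa [abs_neg])
  · simpa only [← hvw] using le_of_lt_cycleRuntime hv hd

theorem card_lt_cycleRuntime_mul_le [NeZero n] (hI : Injective I) (k : ℕ) :
    #{v | k < cycleRuntime n I v} * (k + 1) ≤ n := by
  set S : Finset (ZMod n) := {v | k < cycleRuntime n I v}
  obtain hS | ⟨v₀, hv₀⟩ := S.eq_empty_or_nonempty
  · simp [hS]
  have hkn : k < n := by
    have := cycleRuntime_le I v₀
    have : k < cycleRuntime n I v₀ := (mem_filter.1 hv₀).2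
    omega
  calc #S * (k + 1) = #(S ×ˢ range (k + 1)) := by rw [card_product, card_range]
    _ ≤ #(univ : Finset (ZMod n)) := by
        refine card_le_card_of_injOn (fun p => p.1 + (p.2 : ℕ)) (fun _ _ => mem_univ _) ?_
        rintro ⟨v, i⟩ hvi ⟨w, i'⟩ hwi' h
        simp only [mem_coe, mem_product, mem_range, S, mem_filter, mem_univ, true_and] at hvi hwi' h
        obtain rfl : v = w := eq_of_lt_cycleRuntime hI hvi.1 hwi'.1 (d := (i : ℤ) - i')
          (abs_le.2 ⟨by omega, by omega⟩) (by push_cast; linear_combination -h)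
        have hii' := congrArg ZMod.val (add_left_cancel h)
        rw [ZMod.val_cast_of_lt (by omega), ZMod.val_cast_of_lt (by omega)] at hii'
        rw [hii']
    _ = n := by simp

theorem sum_cycleRuntime_le_mul_harmonic [NeZero n] (hI : Injective I) :
    ∑ v, (cycleRuntime n I v : ℝ) ≤ n * harmonic ((n + 1) / 2) := by
  rw [← Nat.cast_sum, sum_eq_sum_range_card_filter_lt _ _ fun v _ => cycleRuntime_le I v,
    harmonic, Rat.cast_sum, mul_sum, Nat.cast_sum]
  gcongr with k
  rw [Rat.cast_inv, Rat.cast_natCast, ← div_eq_mul_inv, le_div_iff₀ (by positivity)]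
  exact_mod_cast card_lt_cycleRuntime_mul_le hI k

theorem average_cycleRuntime_le_two_mul_log (hn : 3 ≤ n) (hI : Injective I) :
    1 / (n : ℝ) * ∑ v : Fin n, (cycleRuntime n I (v : ℕ) : ℝ) ≤ 2 * log n := by
  have : NeZero n := ⟨by omega⟩
  have hlog : 1 ≤ log n := by
    rw [le_log_iff_exp_le (by positivity)]
    linarith [exp_one_lt_d9, (show (3 : ℝ) ≤ n by exact_mod_cast hn)]
  have hlogM : log ((n + 1) / 2 : ℕ) ≤ log n :=
    log_le_log (by norm_cast; omega) (by norm_cast; omega)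
  rw [ZMod.sum_fin_natCast n fun v => (cycleRuntime n I v : ℝ)]
  calc 1 / (n : ℝ) * ∑ v, (cycleRuntime n I v : ℝ)
      ≤ 1 / n * (n * harmonic ((n + 1) / 2)) := by
        gcongr
        exact sum_cycleRuntime_le_mul_harmonic hI
    _ = harmonic ((n + 1) / 2) := by field_simp
    _ ≤ 1 + log ((n + 1) / 2 : ℕ) := harmonic_le_one_add_log _
    _ ≤ 2 * log n := by linarith

end UpperBound

/-- Exponential gap between node-averaged and slowest-node complexity, witnessed by
leader election on cycles: (i) every local algorithm solving leader election on
`n`-cycles has a node of running time at least `n/4` (so the slowest-node complexity is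
`Θ(n)`), while (ii) the grow-until-dominated algorithm solves leader election with
node-averaged running time `O(log n)`. -/
theorem stmt_15 :
    (∀ n : ℕ, 3 ≤ n →
      ¬ ∃ (k : ℕ) (out : (ZMod n → ℕ) → ZMod n → Bool),
        k < n / 4 ∧
        (∀ (I I' : ZMod n → ℕ) (v v' : ZMod n),
          (∀ j : ℤ, |j| ≤ (k : ℤ) → I (v + (j : ZMod n)) = I' (v' + (j : ZMod n))) →
          out I v = out I' v') ∧
        (∀ I : ZMod n → ℕ, Function.Injective I → (∀ x, I x < n ^ 3) →
          ∃! v : ZMod n, out I v = true)) ∧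
    (∃ C : ℝ, 0 < C ∧ ∀ n : ℕ, 3 ≤ n → ∀ I : ZMod n → ℕ, Function.Injective I →
      (∃! v : ZMod n, ∀ u : ZMod n, I u ≤ I v) ∧
      (1 / (n : ℝ)) * ∑ v : Fin n, (cycleRuntime n I ((v : ℕ) : ZMod n) : ℝ) ≤ C * Real.log n) := by
  refine ⟨fun n _ => not_exists_local_leader_election_rule n, 2, two_pos, fun n hn I hI => ?_⟩
  have : NeZero n := ⟨by omega⟩
  exact ⟨hI.existsUnique_forall_le, average_cycleRuntime_le_two_mul_log hn hI⟩
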